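/- arXiv:1411.4962 — 4 statements merged into one kernel-verified Lean document; each statement's English description precedes it below -/
import Mathlib

section
/- Let 𝔛 be a nonempty set, (X,‖·‖) a Banach space, and F, A : 𝔛 → X two maps. Suppose there exists a constant K with 0 < K < 1 such that ‖F[u] − F[v] − (A[u] − A[v])‖ ≤ K ‖A[u] − A[v]‖ for all u, v ∈ 𝔛. Then, if A is a bijection from 𝔛 onto X, F is a bijection from 𝔛 onto X as well. -/
/-!
Campanato's theorem on near operators: if `F` is "near" the bijection `A`
(in the sense of the displayed inequality with constant `0 < K < 1`),
then `F` is a bijection as well.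
-/

theorem campanato_near_operators
    {𝔛 : Type*} [Nonempty 𝔛]
    {X : Type*} [NormedAddCommGroup X] [NormedSpace ℝ X] [CompleteSpace X]
    (F A : 𝔛 → X) (K : ℝ) (hK0 : 0 < K) (hK1 : K < 1)
    (hnear : ∀ u v : 𝔛, ‖F u - F v - (A u - A v)‖ ≤ K * ‖A u - A v‖)
    (hA : Function.Bijective A) :
    Function.Bijective F := by
  set e : 𝔛 ≃ X := Equiv.ofBijective A hA with he
  have hAe : ∀ u, A u = e u := fun u => rfl
  set G : X → X := fun x => F (e.symm x) with hG
  have hGnear : ∀ x y : X, ‖G x - G y - (x - y)‖ ≤ K * ‖x - y‖ := by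
    intro x y
    have := hnear (e.symm x) (e.symm y)
    simpa [hG, hAe, e.apply_symm_apply] using this
  -- G is injective
  have hGinj : Function.Injective G := by
    intro x y hxy
    have h1 : ‖x - y‖ ≤ K * ‖x - y‖ := by
      have := hGnear x y
      rw [hxy] at this
      simpa [norm_sub_rev] using this
    by_contra hne
    have hpos : 0 < ‖x - y‖ := by
      simp only [norm_pos_iff, sub_ne_zero]; exact hne
    nlinarith
  -- G is surjective via Banach fixed point
  have hGsurj : Function.Surjective G := by
    intro z
    set h : X → X := fun t => t - G t + z with hh
    have hlip : LipschitzWith ⟨K, hK0.le⟩ h := by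
      apply LipschitzWith.of_dist_le_mul
      intro t s
      simp only [hh, dist_eq_norm]
      have : t - G t + z - (s - G s + z) = -(G t - G s - (t - s)) := by abel
      rw [this, norm_neg]
      exact hGnear t s
    have hcontr : ContractingWith ⟨K, hK0.le⟩ h := ⟨by exact_mod_cast hK1, hlip⟩
    have : Nonempty X := ⟨z⟩
    set x := ContractingWith.fixedPoint h hcontr with hx
    have hfix : h x = x := hcontr.fixedPoint_isFixedPt
    have h1 : x - G x + z = x := hfix
    refine ⟨x, ?_⟩
    have h2 : G x - z = x - (x - G x + z) := by abel
    rw [h1] at h2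
    have h3 : G x - z = 0 := by rw [h2, sub_self]
    exact sub_eq_zero.mp h3
  -- combine
  have hFeq : F = G ∘ A := by
    funext u
    simp [hG, hAe, e.symm_apply_apply]
  rw [hFeq]
  exact Function.Bijective.comp ⟨hGinj, hGsurj⟩ hA
end

section
/- Every tensor **A** ∈ ℝ^{Nn×Nn}_s satisfying the structural hypothesis (SH) is rank-one positive; more precisely, for all η ∈ ℝ^N and a ∈ ℝⁿ one has **A**:η⊗a⊗η⊗a ≥ ( λ₁(B¹+⋯+B^N) · min_{γ=1,…,N} λ₁(A^γ) ) |η|²|a|², and the constant in brackets is strictly positive. -/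
open MeasureTheory Filter Topology
open scoped BigOperators

noncomputable section

/-- `Euc n` is the Euclidean space `ℝⁿ`. -/
abbrev Euc (n : ℕ) : Type := EuclideanSpace ℝ (Fin n)

/-- Squared Euclidean norm of a finite vector. -/
def vsq {m : ℕ} (v : Fin m → ℝ) : ℝ := ∑ i, (v i) ^ 2

/-- Squared Euclidean norm of a third order tensor `X ∈ ℝ^{N×n×n}`. -/
def tsq {N n : ℕ} (X : Fin N → Fin n → Fin n → ℝ) : ℝ :=
  ∑ α, ∑ i, ∑ j, (X α i j) ^ 2

/-- First partial derivative `D_i f`. -/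
def pder {n : ℕ} (f : Euc n → ℝ) (i : Fin n) (x : Euc n) : ℝ :=
  fderiv ℝ f x (EuclideanSpace.single i 1)

/-- Second partial derivative `D²_{ij} f`. -/
def pder2 {n : ℕ} (f : Euc n → ℝ) (i j : Fin n) (x : Euc n) : ℝ :=
  pder (fun y => pder f j y) i x

/-- Hessian tensor `D²u(x) ∈ ℝ^{Nn²}` of a vector valued map `u : ℝⁿ → ℝ^N`. -/
def Hess {n N : ℕ} (u : Euc n → Fin N → ℝ) (x : Euc n) : Fin N → Fin n → Fin n → ℝ :=
  fun α i j => pder2 (fun y => u y α) i j x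

/-- The contraction `(𝐀:X)_α = Σ_{i,β,j} A_{αiβj} X_{βij}`. -/
def AC {n N : ℕ} (A : Fin N → Fin n → Fin N → Fin n → ℝ)
    (X : Fin N → Fin n → Fin n → ℝ) : Fin N → ℝ :=
  fun α => ∑ i, ∑ β, ∑ j, A α i β j * X β i j

/-- The quadratic form `𝐀 : η⊗a⊗η⊗a = Σ A_{αiβj} η_α a_i η_β a_j`. -/
def QF {n N : ℕ} (A : Fin N → Fin n → Fin N → Fin n → ℝ)
    (η : Fin N → ℝ) (a : Fin n → ℝ) : ℝ :=
  ∑ α, ∑ i, ∑ β, ∑ j, A α i β j * η α * a i * η β * a j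

/-- Symmetry `A_{αiβj} = A_{βjαi}` of a fourth order tensor (i.e. `𝐀 ∈ ℝ^{Nn×Nn}_s`). -/
def SymT {n N : ℕ} (A : Fin N → Fin n → Fin N → Fin n → ℝ) : Prop :=
  ∀ α i β j, A α i β j = A β j α i

/-- Symmetry `X_{αij} = X_{αji}`, i.e. `X ∈ ℝ^{Nn²}_s`. -/
def SymX {n N : ℕ} (X : Fin N → Fin n → Fin n → ℝ) : Prop :=
  ∀ α i j, X α i j = X α j i

/-- `𝐀` is rank-one positive: `𝐀:η⊗a⊗η⊗a ≥ ν |η|²|a|²` for some `ν > 0`. -/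
def RankOnePos {n N : ℕ} (A : Fin N → Fin n → Fin N → Fin n → ℝ) : Prop :=
  ∃ ν > (0:ℝ), ∀ (η : Fin N → ℝ) (a : Fin n → ℝ), ν * vsq η * vsq a ≤ QF A η a

/-- The ellipticity constant `ν(𝐀) = min_{|η|=|a|=1} 𝐀:η⊗a⊗η⊗a`. -/
def nuA {n N : ℕ} (A : Fin N → Fin n → Fin N → Fin n → ℝ) : ℝ :=
  sInf {v | ∃ (η : Fin N → ℝ) (a : Fin n → ℝ), vsq η = 1 ∧ vsq a = 1 ∧ v = QF A η a}

/-- The smallest eigenvalue `λ₁(M) = min_{|a|=1} M:a⊗a` of a symmetric matrix. -/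
def lam1 {m : ℕ} (M : Matrix (Fin m) (Fin m) ℝ) : ℝ :=
  sInf {v | ∃ a : Fin m → ℝ, vsq a = 1 ∧ v = ∑ i, ∑ j, M i j * a i * a j}

/-- The structural hypothesis (SH) for `𝐀` with the decomposition data
`𝐀 = Σ_γ B^γ ⊗ A^γ` given explicitly. -/
def SHdata {n N : ℕ} (A : Fin N → Fin n → Fin N → Fin n → ℝ)
    (B : Fin N → Matrix (Fin N) (Fin N) ℝ)
    (M : Fin N → Matrix (Fin n) (Fin n) ℝ) : Prop :=
  (∀ γ, (B γ).IsSymm) ∧ (∀ γ, (M γ).IsSymm) ∧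
  (∀ α i β j, A α i β j = ∑ γ, B γ α β * M γ i j) ∧
  (∀ γ δ, γ ≠ δ → ∀ y z : Fin N → ℝ, ∑ α, (B γ).mulVec y α * (B δ).mulVec z α = 0) ∧
  (∑ γ, B γ).PosDef ∧ (∀ γ, (M γ).PosDef) ∧
  (∃ a : Fin n → ℝ, a ≠ 0 ∧ ∀ γ, (M γ).mulVec a = lam1 (M γ) • a)

/-- The structural hypothesis (SH). -/
def SH {n N : ℕ} (A : Fin N → Fin n → Fin N → Fin n → ℝ) : Prop :=
  ∃ B M, SHdata A B M

/-- `Ω` is a (bounded) domain with `C²` boundary, encoded via a `C²` defining function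
with nonvanishing gradient on the boundary. -/
def IsC2Domain {n : ℕ} (Ω : Set (Euc n)) : Prop :=
  ∃ ρ : Euc n → ℝ, ContDiff ℝ 2 ρ ∧ Ω = {x | ρ x < 0} ∧
    ∀ x ∈ frontier Ω, fderiv ℝ ρ x ≠ 0

/-- `F : Ω × ℝ^{Nn²}_s → ℝ^N` is a Carathéodory map: measurable in `x`, continuous in `X`. -/
def Caratheodory {n N : ℕ} (Ω : Set (Euc n))
    (F : Euc n → (Fin N → Fin n → Fin n → ℝ) → Fin N → ℝ) : Prop :=
  (∀ X, Measurable fun x => F x X) ∧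
  (∀ᵐ x ∂(volume.restrict Ω), Continuous fun X => F x X)

/-- The K-condition (ellipticity) for `F` with data `(𝐀, α, β, γ)`. -/
def KCond {n N : ℕ} (Ω : Set (Euc n))
    (F : Euc n → (Fin N → Fin n → Fin n → ℝ) → Fin N → ℝ)
    (A : Fin N → Fin n → Fin N → Fin n → ℝ)
    (al : Euc n → ℝ) (β γ : ℝ) : Prop :=
  SymT A ∧ RankOnePos A ∧ Measurable al ∧
  (∃ C : ℝ, ∀ᵐ x ∂(volume.restrict Ω), |al x| ≤ C) ∧
  (∀ᵐ x ∂(volume.restrict Ω), 0 < al x) ∧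
  (∃ C : ℝ, ∀ᵐ x ∂(volume.restrict Ω), |1 / al x| ≤ C) ∧
  0 < β ∧ 0 < γ ∧ β + γ < 1 ∧
  (∀ᵐ x ∂(volume.restrict Ω), ∀ X Z : Fin N → Fin n → Fin n → ℝ, SymX X → SymX Z →
    Real.sqrt (vsq fun α => AC A Z α - al x * (F x (X + Z) α - F x X α)) ≤
      β * nuA A * Real.sqrt (tsq Z) + γ * Real.sqrt (vsq (AC A Z)))

/-- Membership `u ∈ (H² ∩ H¹₀)(Ω)^N` (as a strong/classical object): twice
differentiable on `Ω`, with `u`, `Du`, `D²u` square integrable on `Ω`, and zero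
boundary trace. -/
structure IsH2H10 {n N : ℕ} (Ω : Set (Euc n)) (u : Euc n → Fin N → ℝ) : Prop where
  contDiffOn : ∀ α, ContDiffOn ℝ 2 (fun x => u x α) Ω
  memL2 : IntegrableOn (fun x => vsq (u x)) Ω volume
  grad_memL2 : IntegrableOn (fun x => ∑ α, ∑ i, (pder (fun y => u y α) i x) ^ 2) Ω volume
  hess_memL2 : IntegrableOn (fun x => tsq (Hess u x)) Ω volume
  zero_trace : ∀ x ∈ frontier Ω, Tendsto u (nhdsWithin x Ω) (nhds 0)

/-- The `L²(Ω)^N` norm of a vector valued map. -/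
def L2V {n N : ℕ} (Ω : Set (Euc n)) (g : Euc n → Fin N → ℝ) : ℝ :=
  Real.sqrt (∫ x in Ω, vsq (g x))

/-- The `L²(Ω)` norm of a tensor valued map. -/
def L2T {n N : ℕ} (Ω : Set (Euc n)) (G : Euc n → Fin N → Fin n → Fin n → ℝ) : ℝ :=
  Real.sqrt (∫ x in Ω, tsq (G x))

/-- The `H²(Ω)^N` norm `‖u‖_{L²} + ‖Du‖_{L²} + ‖D²u‖_{L²}`. -/
def H2norm {n N : ℕ} (Ω : Set (Euc n)) (u : Euc n → Fin N → ℝ) : ℝ :=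
  L2V Ω u + Real.sqrt (∫ x in Ω, ∑ α, ∑ i, (pder (fun y => u y α) i x) ^ 2) +
    L2T Ω (fun x => Hess u x)

end

/-! With `P = ∑ γ, B γ`, the structural hypothesis splits the form as
`𝐀:η⊗a⊗η⊗a = ∑ γ, (η·B^γ η)(a·A^γ a)`. Orthogonality of the ranges gives `B^γ B^δ = 0` for
`γ ≠ δ`, hence `P B^γ = (B^γ)² = B^γ P`, so `B^γ = B^γ P⁻¹ B^γ` is positive semidefinite.
Bounding each `a·A^γ a` below by `min_γ λ₁(A^γ) |a|²` and summing the `η·B^γ η` back to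
`η·P η ≥ λ₁(P) |η|²` gives the inequality. The constant is positive because `λ₁` of a positive
definite matrix is attained on the (compact) unit sphere. -/

open Matrix

section Rayleigh

variable {m : ℕ}

theorem sum_sum_mul_mul_eq_dotProduct_mulVec (Q : Matrix (Fin m) (Fin m) ℝ) (a : Fin m → ℝ) :
    ∑ i, ∑ j, Q i j * a i * a j = a ⬝ᵥ Q *ᵥ a := by
  simp only [dotProduct, mulVec, Finset.mul_sum]
  exact Finset.sum_congr rfl fun i _ => Finset.sum_congr rfl fun j _ => by ring

theorem vsq_eq_norm_sq (a : Fin m → ℝ) : vsq a = ‖WithLp.toLp 2 a‖ ^ 2 := by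
  simp [vsq, EuclideanSpace.norm_sq_eq]

theorem vsq_nonneg (a : Fin m → ℝ) : 0 ≤ vsq a := by
  rw [vsq_eq_norm_sq]
  positivity

theorem lam1_eq_sInf_image (Q : Matrix (Fin m) (Fin m) ℝ) :
    lam1 Q = sInf ((fun u => u ⬝ᵥ Q *ᵥ u) '' {u | vsq u = 1}) := by
  simp only [lam1, sum_sum_mul_mul_eq_dotProduct_mulVec, Set.image, Set.mem_ofPred_eq, eq_comm]

theorem setOf_vsq_eq_one_eq_image_sphere :
    {u : Fin m → ℝ | vsq u = 1} = WithLp.ofLp '' Metric.sphere (0 : EuclideanSpace ℝ (Fin m)) 1 := by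
  ext u
  simp only [Set.mem_ofPred_eq, vsq_eq_norm_sq, pow_eq_one_iff_of_nonneg (norm_nonneg _) two_ne_zero]
  exact ⟨fun hu => ⟨WithLp.toLp 2 u, by simpa using hu, rfl⟩, by rintro ⟨x, hx, rfl⟩; simpa using hx⟩

theorem isCompact_setOf_vsq_eq_one : IsCompact {u : Fin m → ℝ | vsq u = 1} := by
  rw [setOf_vsq_eq_one_eq_image_sphere]
  exact (isCompact_sphere _ _).image (PiLp.continuous_ofLp 2 _)

theorem lam1_le (Q : Matrix (Fin m) (Fin m) ℝ) {u : Fin m → ℝ} (hu : vsq u = 1) :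
    lam1 Q ≤ u ⬝ᵥ Q *ᵥ u := by
  rw [lam1_eq_sInf_image]
  exact csInf_le (isCompact_setOf_vsq_eq_one.image (by fun_prop)).bddBelow ⟨u, hu, rfl⟩

theorem lam1_mul_vsq_le (Q : Matrix (Fin m) (Fin m) ℝ) (a : Fin m → ℝ) :
    lam1 Q * vsq a ≤ a ⬝ᵥ Q *ᵥ a := by
  rcases eq_or_ne (WithLp.toLp 2 a) 0 with ha | ha
  · simp [(WithLp.toLp_eq_zero 2).1 ha, vsq]
  set r := ‖WithLp.toLp 2 a‖
  have hr : 0 < r := norm_pos_iff.2 ha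
  have hu : vsq (r⁻¹ • a) = 1 := by
    rw [vsq_eq_norm_sq, WithLp.toLp_smul, norm_smul, Real.norm_of_nonneg (inv_nonneg.2 hr.le),
      inv_mul_cancel₀ hr.ne', one_pow]
  have hle := lam1_le Q hu
  rw [mulVec_smul, smul_dotProduct, dotProduct_smul, smul_eq_mul, smul_eq_mul] at hle
  rw [vsq_eq_norm_sq]
  calc lam1 Q * r ^ 2 ≤ r⁻¹ * (r⁻¹ * (a ⬝ᵥ Q *ᵥ a)) * r ^ 2 := by gcongr
    _ = a ⬝ᵥ Q *ᵥ a := by field_simp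

theorem exists_vsq_eq_one_lam1_eq (hm : 0 < m) (Q : Matrix (Fin m) (Fin m) ℝ) :
    ∃ u, vsq u = 1 ∧ lam1 Q = u ⬝ᵥ Q *ᵥ u := by
  have hne : {u : Fin m → ℝ | vsq u = 1}.Nonempty := by
    have : NeZero m := ⟨hm.ne'⟩
    rw [setOf_vsq_eq_one_eq_image_sphere]
    exact (NormedSpace.sphere_nonempty.2 zero_le_one).image _
  obtain ⟨u, hu, h⟩ := (isCompact_setOf_vsq_eq_one.image (f := fun u => u ⬝ᵥ Q *ᵥ u)
    (by fun_prop)).sInf_mem (hne.image _)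
  exact ⟨u, hu, (lam1_eq_sInf_image Q).trans h.symm⟩

theorem lam1_pos (hm : 0 < m) {Q : Matrix (Fin m) (Fin m) ℝ} (hQ : Q.PosDef) : 0 < lam1 Q := by
  obtain ⟨u, hu, h⟩ := exists_vsq_eq_one_lam1_eq hm Q
  have hu0 : u ≠ 0 := by rintro rfl; simp [vsq] at hu
  simpa [h] using hQ.dotProduct_mulVec_pos hu0

end Rayleigh

namespace Matrix

variable {ι m n p R : Type*} [Fintype m] [Fintype n] [Fintype p]

theorem transpose_mul_eq_zero_of_forall_dotProduct_mulVec [CommSemiring R] [DecidableEq n]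
    [DecidableEq p] {X : Matrix m n R} {Y : Matrix m p R}
    (h : ∀ y z, X *ᵥ y ⬝ᵥ Y *ᵥ z = 0) : Xᵀ * Y = 0 := by
  ext i j
  simpa [mulVec_single_one, dotProduct, mul_apply] using h (Pi.single i 1) (Pi.single j 1)

theorem PosSemidef.of_pairwise_mul_eq_zero_of_posDef_sum [Fintype ι] [DecidableEq n]
    {K : Type*} [Field K] [PartialOrder K] [StarRing K] {B : ι → Matrix n n K}
    (hB : ∀ γ, (B γ).IsHermitian) (hBB : Pairwise fun γ δ => B γ * B δ = 0)
    (hP : (∑ γ, B γ).PosDef) (γ : ι) : (B γ).PosSemidef := by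
  set P := ∑ δ, B δ
  have hPB : P * B γ = B γ * B γ := by
    rw [Finset.sum_mul]
    exact Finset.sum_eq_single_of_mem γ (Finset.mem_univ γ) fun δ _ hδ => hBB hδ
  have hBP : B γ * P = B γ * B γ := by
    rw [Finset.mul_sum]
    exact Finset.sum_eq_single_of_mem γ (Finset.mem_univ γ) fun δ _ hδ => hBB hδ.symm
  let := hP.isUnit.invertible
  have hcomm : Commute (B γ) P⁻¹ := by
    rw [← invOf_eq_nonsing_inv]
    exact Commute.invOf_right (hBP.trans hPB.symm)
  have hconj : (B γ)ᴴ * P⁻¹ * B γ = B γ := by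
    rw [(hB γ).eq, hcomm.eq, mul_assoc, ← hPB, inv_mul_cancel_left_of_invertible]
  exact hconj ▸ hP.inv.posSemidef.conjTranspose_mul_mul_same (B γ)

end Matrix

theorem QF_sum {ι : Type*} [Fintype ι] {n N : ℕ} (T : ι → Fin N → Fin n → Fin N → Fin n → ℝ)
    (η : Fin N → ℝ) (a : Fin n → ℝ) : QF (∑ γ, T γ) η a = ∑ γ, QF (T γ) η a := by
  simp only [QF, Finset.sum_apply, Finset.sum_mul]
  refine (Finset.sum_comm.trans (Finset.sum_congr rfl fun α _ => Finset.sum_comm.trans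
    (Finset.sum_congr rfl fun i _ => Finset.sum_comm.trans
      (Finset.sum_congr rfl fun β _ => Finset.sum_comm)))).symm

theorem QF_kronecker {n N : ℕ} (B : Matrix (Fin N) (Fin N) ℝ) (M : Matrix (Fin n) (Fin n) ℝ)
    (η : Fin N → ℝ) (a : Fin n → ℝ) :
    QF (fun α i β j => B α β * M i j) η a = (η ⬝ᵥ B *ᵥ η) * (a ⬝ᵥ M *ᵥ a) := by
  simp only [QF, ← sum_sum_mul_mul_eq_dotProduct_mulVec, Finset.sum_mul_sum]
  exact Finset.sum_congr rfl fun _ _ => Finset.sum_congr rfl fun _ _ =>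
    Finset.sum_congr rfl fun _ _ => Finset.sum_congr rfl fun _ _ => by ring

theorem lam1_sum_mul_vsq_mul_vsq_le {ι : Type*} [Fintype ι] {n N : ℕ}
    {B : ι → Matrix (Fin N) (Fin N) ℝ} {M : ι → Matrix (Fin n) (Fin n) ℝ}
    (hB : ∀ γ, (B γ).PosSemidef) {μ : ℝ} (hμ : 0 ≤ μ) (hμM : ∀ γ, μ ≤ lam1 (M γ))
    (η : Fin N → ℝ) (a : Fin n → ℝ) :
    lam1 (∑ γ, B γ) * μ * vsq η * vsq a ≤ ∑ γ, (η ⬝ᵥ B γ *ᵥ η) * (a ⬝ᵥ M γ *ᵥ a) :=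
  calc lam1 (∑ γ, B γ) * μ * vsq η * vsq a
      = lam1 (∑ γ, B γ) * vsq η * (μ * vsq a) := by ring
    _ ≤ (η ⬝ᵥ (∑ γ, B γ) *ᵥ η) * (μ * vsq a) := by
      gcongr
      · exact mul_nonneg hμ (vsq_nonneg a)
      · exact lam1_mul_vsq_le _ η
    _ = ∑ γ, (η ⬝ᵥ B γ *ᵥ η) * (μ * vsq a) := by
      rw [sum_mulVec, dotProduct_sum, Finset.sum_mul]
    _ ≤ ∑ γ, (η ⬝ᵥ B γ *ᵥ η) * (a ⬝ᵥ M γ *ᵥ a) := by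
      gcongr with γ
      · simpa using (hB γ).dotProduct_mulVec_nonneg η
      · exact (mul_le_mul_of_nonneg_right (hμM γ) (vsq_nonneg a)).trans (lam1_mul_vsq_le _ a)

namespace SHdata

variable {n N : ℕ} {A : Fin N → Fin n → Fin N → Fin n → ℝ}
  {B : Fin N → Matrix (Fin N) (Fin N) ℝ} {M : Fin N → Matrix (Fin n) (Fin n) ℝ}

theorem lam1_sum_pos (hN : 0 < N) (h : SHdata A B M) : 0 < lam1 (∑ γ, B γ) := by
  obtain ⟨-, -, -, -, hP, -⟩ := h
  exact lam1_pos hN hP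

theorem lam1_pos (h : SHdata A B M) (γ : Fin N) : 0 < lam1 (M γ) := by
  obtain ⟨-, -, -, -, -, hM, a, ha, -⟩ := h
  have hn : 0 < n := Nat.pos_of_ne_zero (by rintro rfl; exact ha (Subsingleton.elim _ _))
  exact _root_.lam1_pos hn (hM γ)

theorem posSemidef (h : SHdata A B M) (γ : Fin N) : (B γ).PosSemidef := by
  obtain ⟨hB, -, -, horth, hP, -⟩ := h
  refine PosSemidef.of_pairwise_mul_eq_zero_of_posDef_sum
    (fun γ => isHermitian_iff_isSymm.2 (hB γ)) (fun γ δ hγδ => ?_) hP γ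
  simpa only [(hB γ).eq] using transpose_mul_eq_zero_of_forall_dotProduct_mulVec (horth γ δ hγδ)

theorem QF_eq (h : SHdata A B M) (η : Fin N → ℝ) (a : Fin n → ℝ) :
    QF A η a = ∑ γ, (η ⬝ᵥ B γ *ᵥ η) * (a ⬝ᵥ M γ *ᵥ a) := by
  obtain ⟨-, -, hA, -⟩ := h
  have hA' : A = ∑ γ, fun α i β j => B γ α β * M γ i j := by
    ext α i β j
    simp [hA]
  simp only [hA', QF_sum, QF_kronecker]

end SHdata

/-- Every tensor `𝐀 = Σ_γ B^γ ⊗ A^γ` satisfying the structural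
hypothesis (SH) is rank-one positive; more precisely
`𝐀:η⊗a⊗η⊗a ≥ (λ₁(B¹+⋯+B^N) · min_γ λ₁(A^γ)) |η|²|a|²`, and the constant is
strictly positive. -/
theorem SH_implies_rankOnePositive
    {n N : ℕ} (hN : 0 < N)
    (A : Fin N → Fin n → Fin N → Fin n → ℝ)
    (B : Fin N → Matrix (Fin N) (Fin N) ℝ)
    (M : Fin N → Matrix (Fin n) (Fin n) ℝ)
    (hSH : SHdata A B M) :
    0 < lam1 (∑ γ, B γ) *
        (Finset.univ.inf' ⟨⟨0, hN⟩, Finset.mem_univ _⟩ fun γ => lam1 (M γ)) ∧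
    ∀ (η : Fin N → ℝ) (a : Fin n → ℝ),
      lam1 (∑ γ, B γ) *
          (Finset.univ.inf' ⟨⟨0, hN⟩, Finset.mem_univ _⟩ fun γ => lam1 (M γ)) *
          vsq η * vsq a ≤ QF A η a := by
  set μ := Finset.univ.inf' ⟨⟨0, hN⟩, Finset.mem_univ _⟩ fun γ => lam1 (M γ)
  have hμ : 0 < μ := (Finset.lt_inf'_iff _).2 fun γ _ => hSH.lam1_pos γ
  refine ⟨mul_pos (hSH.lam1_sum_pos hN) hμ, fun η a => ?_⟩
  rw [hSH.QF_eq]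
  exact lam1_sum_mul_vsq_mul_vsq_le hSH.posSemidef hμ.le
    (fun γ => Finset.inf'_le _ (Finset.mem_univ γ)) η a
end

section
/- Let A ∈ ℝ^{n×n} be symmetric positive definite, written as A = K Kᵀ with K = OΛ, where O is orthogonal and Λ is the diagonal matrix of square roots of the eigenvalues of A. For v ∈ C²(overline{Ω}) define ṽ(x) := v(Kx) on Ω̃ := K⁻¹Ω. Then for every x ∈ Ω̃: (i) Δṽ(x) = A : D²v(Kx), and (ii) |D²ṽ(x)|² ≥ ν(A)² |D²v(Kx)|², where ν(A) is the smallest eigenvalue of A. -/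
open MeasureTheory Filter Topology
open scoped BigOperators

open Matrix

noncomputable section

/-- Reinterpret a coordinate vector as a point of Euclidean space. -/
def toE {n : ℕ} (v : Fin n → ℝ) : Euc n := (WithLp.equiv 2 (Fin n → ℝ)).symm v

end

/-! Since `y ↦ K y` is linear, the chain rule gives `D²ṽ(x) = Kᵀ H K` with `H = D²v(Kx)`.
Part (i) is then `tr (Kᵀ H K) = tr (K Kᵀ H) = A : H`. For part (ii) write
`Kᵀ H K = Λ (Oᵀ H O) Λ`: conjugation by the orthogonal `O` preserves the Frobenius norm, and
`Λ · Λ` multiplies the square of the `(i, j)` entry by `λ_i λ_j ≥ λ₁²`. -/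

open Matrix

section ChainRule

variable {E F : Type*} [NormedAddCommGroup E] [NormedSpace ℝ E]
  [NormedAddCommGroup F] [NormedSpace ℝ F]

theorem fderiv_comp_continuousLinearMap_apply (L : E →L[ℝ] F) {v : F → ℝ} {y : E}
    (hv : DifferentiableAt ℝ v (L y)) (w : E) :
    fderiv ℝ (fun z => v (L z)) y w = fderiv ℝ v (L y) (L w) := by
  rw [show (fun z => v (L z)) = v ∘ L from rfl, fderiv_comp y hv L.differentiableAt, L.fderiv]
  rfl

theorem fderiv_fderiv_comp_continuousLinearMap_apply (L : E →L[ℝ] F) {v : F → ℝ} {x : E}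
    (hv : ∀ᶠ q in 𝓝 (L x), DifferentiableAt ℝ v q)
    (hv' : DifferentiableAt ℝ (fderiv ℝ v) (L x)) (u w : E) :
    fderiv ℝ (fun y => fderiv ℝ (fun z => v (L z)) y w) x u =
      fderiv ℝ (fderiv ℝ v) (L x) (L u) (L w) := by
  have hev : (fun y => fderiv ℝ (fun z => v (L z)) y w) =ᶠ[𝓝 x]
      fun y => fderiv ℝ v (L y) (L w) :=
    (L.continuous.continuousAt.eventually hv).mono fun y hy =>
      fderiv_comp_continuousLinearMap_apply L hy w
  have hg : DifferentiableAt ℝ (fun q => fderiv ℝ v q (L w)) (L x) :=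
    hv'.clm_apply (differentiableAt_const _)
  rw [hev.fderiv_eq, fderiv_comp_continuousLinearMap_apply L hg,
    fderiv_clm_apply hv' (differentiableAt_const _)]
  simp

end ChainRule

section MatrixIdentities

variable {m : Type*} [Fintype m]

theorem trace_transpose_mul_mul {R : Type*} [CommSemiring R] (K H : Matrix m m R) :
    trace (Kᵀ * H * K) = ∑ i, ∑ j, (K * Kᵀ) i j * H i j := by
  rw [trace_mul_cycle, trace_mul_comm]
  simp only [trace, diag, mul_apply, transpose_apply]
  refine Finset.sum_congr rfl fun i _ => Finset.sum_congr rfl fun k _ => ?_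
  rw [mul_comm]
  simp only [mul_comm (K k _)]

theorem sum_sq_eq_trace_transpose_mul_self (X : Matrix m m ℝ) :
    ∑ i, ∑ j, X i j ^ 2 = trace (Xᵀ * X) := by
  simp only [trace, diag, mul_apply, transpose_apply, sq]
  exact Finset.sum_comm

theorem sum_sq_transpose_mul_mul_orthogonal [DecidableEq m] {O : Matrix m m ℝ}
    (hO : O * Oᵀ = 1) (X : Matrix m m ℝ) :
    ∑ i, ∑ j, (Oᵀ * X * O) i j ^ 2 = ∑ i, ∑ j, X i j ^ 2 := by
  rw [sum_sq_eq_trace_transpose_mul_self, sum_sq_eq_trace_transpose_mul_self,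
    transpose_mul, transpose_mul, transpose_transpose]
  simp only [Matrix.mul_assoc]
  rw [trace_mul_cycle']
  simp only [← Matrix.mul_assoc, hO, Matrix.one_mul]
  rw [Matrix.mul_assoc X, hO, Matrix.mul_one, trace_mul_comm]

theorem sq_mul_sum_sq_le_sum_sq_diagonal_mul_mul [DecidableEq m] (s : m → ℝ) {c : ℝ}
    (hc : 0 ≤ c) (hs : ∀ i, c ≤ s i ^ 2) (N : Matrix m m ℝ) :
    c ^ 2 * ∑ i, ∑ j, N i j ^ 2 ≤ ∑ i, ∑ j, (diagonal s * N * diagonal s) i j ^ 2 := by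
  simp only [Finset.mul_sum, diagonal_mul, mul_diagonal]
  refine Finset.sum_le_sum fun i _ => Finset.sum_le_sum fun j _ => ?_
  have hsij : c ^ 2 ≤ s i ^ 2 * s j ^ 2 := by
    rw [sq]
    exact mul_le_mul (hs i) (hs j) hc (sq_nonneg _)
  calc c ^ 2 * N i j ^ 2 ≤ s i ^ 2 * s j ^ 2 * N i j ^ 2 := by gcongr
    _ = (s i * N i j * s j) ^ 2 := by ring

end MatrixIdentities

section Hessian

variable {n : ℕ}

noncomputable def hessianMatrix (f : Euc n → ℝ) (x : Euc n) : Matrix (Fin n) (Fin n) ℝ :=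
  Matrix.of fun i j => pder2 f i j x

theorem hessianMatrix_eq_fderiv_fderiv {f : Euc n → ℝ} {x : Euc n}
    (hf : DifferentiableAt ℝ (fderiv ℝ f) x) :
    hessianMatrix f x = Matrix.of fun i j =>
      fderiv ℝ (fderiv ℝ f) x (EuclideanSpace.single i 1) (EuclideanSpace.single j 1) := by
  ext i j
  simp only [hessianMatrix, of_apply, pder2, pder]
  rw [fderiv_clm_apply hf (differentiableAt_const _)]
  simp

theorem toEuclideanCLM_single (K : Matrix (Fin n) (Fin n) ℝ) (i : Fin n) :
    toEuclideanCLM (𝕜 := ℝ) K (EuclideanSpace.single i 1) =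
      ∑ k, K k i • EuclideanSpace.single k 1 := by
  ext l
  rw [ofLp_toEuclideanCLM]
  simp [mulVec, dotProduct, Pi.single_apply]

theorem bilin_apply_toEuclideanCLM_single (B : Euc n →L[ℝ] Euc n →L[ℝ] ℝ)
    (K : Matrix (Fin n) (Fin n) ℝ) (i j : Fin n) :
    B (toEuclideanCLM (𝕜 := ℝ) K (EuclideanSpace.single i 1))
        (toEuclideanCLM (𝕜 := ℝ) K (EuclideanSpace.single j 1)) =
      (Kᵀ * Matrix.of (fun k l => B (EuclideanSpace.single k 1) (EuclideanSpace.single l 1)) *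
        K) i j := by
  simp only [toEuclideanCLM_single, map_sum, map_smul, _root_.sum_apply, _root_.smul_apply,
    smul_eq_mul, mul_apply, transpose_apply, of_apply, Finset.sum_mul, Finset.mul_sum]
  exact Finset.sum_congr rfl fun _ _ => Finset.sum_congr rfl fun _ _ => by ring

theorem hessianMatrix_comp_mulVec {v : Euc n → ℝ} (K : Matrix (Fin n) (Fin n) ℝ) {x : Euc n}
    (hv : ∀ᶠ q in 𝓝 (toE (K.mulVec fun j => x j)), DifferentiableAt ℝ v q)
    (hv' : DifferentiableAt ℝ (fderiv ℝ v) (toE (K.mulVec fun j => x j))) :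
    hessianMatrix (fun y => v (toE (K.mulVec fun j => y j))) x =
      Kᵀ * hessianMatrix v (toE (K.mulVec fun j => x j)) * K := by
  ext i j
  rw [hessianMatrix_eq_fderiv_fderiv hv', ← bilin_apply_toEuclideanCLM_single]
  exact fderiv_fderiv_comp_continuousLinearMap_apply (toEuclideanCLM (𝕜 := ℝ) K) hv hv' _ _

end Hessian

theorem transformed_laplacian_and_hessian_general
    {n : ℕ} (hn : 0 < n)
    (A O Λ K : Matrix (Fin n) (Fin n) ℝ)
    (lam : Fin n → ℝ) (hmono : Monotone lam) (hlampos : ∀ i, 0 < lam i)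
    (hO : O * Oᵀ = 1)
    (hΛ : Λ = Matrix.diagonal fun i => Real.sqrt (lam i))
    (hK : K = O * Λ) (hA : A = K * Kᵀ)
    (Ω : Set (Euc n))
    (v : Euc n → ℝ)
    (hv : ∃ U : Set (Euc n), IsOpen U ∧ closure Ω ⊆ U ∧ ContDiffOn ℝ 2 v U)
    (x : Euc n) (hx : toE (K.mulVec fun j => x j) ∈ Ω) :
    (∑ i, pder2 (fun y => v (toE (K.mulVec fun j => y j))) i i x =
      ∑ i, ∑ j, A i j * pder2 v i j (toE (K.mulVec fun j => x j))) ∧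
    ((lam ⟨0, hn⟩) ^ 2 *
        ∑ i, ∑ j, (pder2 v i j (toE (K.mulVec fun j => x j))) ^ 2 ≤
      ∑ i, ∑ j, (pder2 (fun y => v (toE (K.mulVec fun j => y j))) i j x) ^ 2) := by
  obtain ⟨U, hU, hΩU, hvU⟩ := hv
  have hvp : ContDiffAt ℝ 2 v (toE (K.mulVec fun j => x j)) :=
    hvU.contDiffAt (hU.mem_nhds (hΩU (subset_closure hx)))
  have hHess := hessianMatrix_comp_mulVec K
    ((hvp.eventually (by simp)).mono fun q hq => hq.differentiableAt (by norm_num))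
    ((hvp.fderiv_right (m := 1) le_rfl).differentiableAt one_ne_zero)
  set H := hessianMatrix v (toE (K.mulVec fun j => x j))
  refine ⟨?_, ?_⟩
  · have hLap := congrArg trace hHess
    rw [trace_transpose_mul_mul, ← hA] at hLap
    exact hLap
  · have hconj : Kᵀ * H * K = diagonal (fun i => √(lam i)) * (Oᵀ * H * O) *
        diagonal (fun i => √(lam i)) := by
      simp only [hK, hΛ, transpose_mul, diagonal_transpose, Matrix.mul_assoc]
    have hlam : ∀ i, lam ⟨0, hn⟩ ≤ √(lam i) ^ 2 := fun i => by
      rw [Real.sq_sqrt (hlampos i).le]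
      exact hmono (Nat.zero_le i)
    calc lam ⟨0, hn⟩ ^ 2 * ∑ i, ∑ j, H i j ^ 2
        = lam ⟨0, hn⟩ ^ 2 * ∑ i, ∑ j, (Oᵀ * H * O) i j ^ 2 := by
          rw [sum_sq_transpose_mul_mul_orthogonal hO]
      _ ≤ ∑ i, ∑ j, (Kᵀ * H * K) i j ^ 2 := by
          rw [hconj]
          exact sq_mul_sum_sq_le_sum_sq_diagonal_mul_mul _ (hlampos _).le hlam _
      _ = _ := by rw [← hHess]; rfl

/-- Let `A = K Kᵀ` with `K = OΛ`, `O` orthogonal and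
`Λ = diag(√λ₁,…,√λₙ)` the diagonal matrix of square roots of the eigenvalues of `A`
(listed increasingly). For `v ∈ C²(Ω̄)` define `ṽ(x) := v(Kx)` on `Ω̃ := K⁻¹Ω`. Then
for every `x ∈ Ω̃`: (i) `Δṽ(x) = A : D²v(Kx)`, and (ii)
`|D²ṽ(x)|² ≥ ν(A)² |D²v(Kx)|²`, where `ν(A) = λ₁` is the smallest eigenvalue. -/
theorem transformed_laplacian_and_hessian
    {n : ℕ} (hn : 0 < n)
    (A O Λ K : Matrix (Fin n) (Fin n) ℝ)
    (lam : Fin n → ℝ) (hmono : Monotone lam) (hlampos : ∀ i, 0 < lam i)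
    (hO : O * Oᵀ = 1)
    (hΛ : Λ = Matrix.diagonal fun i => Real.sqrt (lam i))
    (hK : K = O * Λ) (hA : A = K * Kᵀ)
    (hAdiag : A = O * Matrix.diagonal lam * Oᵀ)
    (Ω : Set (Euc n))
    (v : Euc n → ℝ)
    (hv : ∃ U : Set (Euc n), IsOpen U ∧ closure Ω ⊆ U ∧ ContDiffOn ℝ 2 v U)
    (x : Euc n) (hx : toE (K.mulVec fun j => x j) ∈ Ω) :
    (∑ i, pder2 (fun y => v (toE (K.mulVec fun j => y j))) i i x =
      ∑ i, ∑ j, A i j * pder2 v i j (toE (K.mulVec fun j => x j))) ∧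
    ((lam ⟨0, hn⟩) ^ 2 *
        ∑ i, ∑ j, (pder2 v i j (toE (K.mulVec fun j => x j))) ^ 2 ≤
      ∑ i, ∑ j, (pder2 (fun y => v (toE (K.mulVec fun j => y j))) i j x) ^ 2) :=
  transformed_laplacian_and_hessian_general hn A O Λ K lam hmono hlampos hO hΛ hK hA Ω v hv x hx
end

section
/- Let 𝔛 be a nonempty set, (X,‖·‖) a Banach space, and A : 𝔛 → X a bijection. Then d(u,v) := ‖A[u] − A[v]‖ defines a metric on 𝔛 under which 𝔛 is a complete metric space, and for any map F : 𝔛 → X satisfying ‖F[u]−F[v]−(A[u]−A[v])‖ ≤ K‖A[u]−A[v]‖ for all u,v ∈ 𝔛 with 0 < K < 1, and any f ∈ X, the map T : 𝔛 → 𝔛, T[u] := A⁻¹(A[u] − (F[u] − f)), is a contraction on (𝔛,d) with contraction constant K; its unique fixed point u satisfies F[u] = f. -/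
open Filter Topology

noncomputable section

/-- The fixed-point map `T[u] := A⁻¹(A[u] − (F[u] − f))` from the proof of
Campanato's near-operators theorem. -/
def Tmap {𝔛 X : Type*} [Nonempty 𝔛] [AddGroup X]
    (A F : 𝔛 → X) (f : X) (u : 𝔛) : 𝔛 :=
  Function.invFun A (A u - (F u - f))

end

/-- Pulling back the Banach space structure of `X` through the
bijection `A`, the function `d(u,v) := ‖A[u] − A[v]‖` is a complete metric on `𝔛`;
and if `F` is near `A` with constant `0 < K < 1`, then for any `f ∈ X` the map
`T[u] := A⁻¹(A[u] − (F[u] − f))` is a `K`-contraction on `(𝔛,d)` whose unique fixed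
point `u` is exactly the solution of `F[u] = f`. -/
theorem campanato_contraction_construction
    {𝔛 : Type*} [Nonempty 𝔛]
    {X : Type*} [NormedAddCommGroup X] [NormedSpace ℝ X] [CompleteSpace X]
    (A F : 𝔛 → X) (hA : Function.Bijective A)
    (K : ℝ) (hK0 : 0 < K) (hK1 : K < 1)
    (hnear : ∀ u v : 𝔛, ‖F u - F v - (A u - A v)‖ ≤ K * ‖A u - A v‖)
    (f : X) :
    -- `d(u,v) = ‖A[u] − A[v]‖` is a metric on `𝔛`:
    (∀ u v : 𝔛, (‖A u - A v‖ = 0 ↔ u = v)) ∧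
    (∀ u v : 𝔛, ‖A u - A v‖ = ‖A v - A u‖) ∧
    (∀ u v w : 𝔛, ‖A u - A w‖ ≤ ‖A u - A v‖ + ‖A v - A w‖) ∧
    -- the metric `d` is complete: every `d`-Cauchy sequence `d`-converges:
    (∀ s : ℕ → 𝔛,
      (∀ ε > (0:ℝ), ∃ m : ℕ, ∀ p ≥ m, ∀ q ≥ m, ‖A (s p) - A (s q)‖ < ε) →
      ∃ u : 𝔛, Tendsto (fun k => ‖A (s k) - A u‖) atTop (𝓝 0)) ∧
    -- `T` is a `K`-contraction with respect to `d`: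
    (∀ u v : 𝔛, ‖A (Tmap A F f u) - A (Tmap A F f v)‖ ≤ K * ‖A u - A v‖) ∧
    -- `T` has a unique fixed point, and fixed points are exactly solutions of `F[u]=f`:
    (∃! u : 𝔛, Tmap A F f u = u) ∧
    (∀ u : 𝔛, Tmap A F f u = u ↔ F u = f) := by
  have hAinv : ∀ x : X, A (Function.invFun A x) = x := fun x =>
    Function.rightInverse_invFun hA.2 x
  have hTA : ∀ u : 𝔛, A (Tmap A F f u) = A u - (F u - f) := fun u => hAinv _
  -- fixed points ↔ solutions
  have hfix : ∀ u : 𝔛, Tmap A F f u = u ↔ F u = f := by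
    intro u
    constructor
    · intro h
      have := hTA u
      rw [h] at this
      exact sub_eq_zero.mp (sub_eq_self.mp this.symm)
    · intro h
      apply hA.1
      rw [hTA u, h, sub_self, sub_zero]
  -- uniqueness of solutions
  have huniq : ∀ u v : 𝔛, F u = f → F v = f → u = v := by
    intro u v hu hv
    have h := hnear u v
    rw [hu, hv, sub_self, zero_sub, norm_neg] at h
    have : ‖A u - A v‖ = 0 := by nlinarith [norm_nonneg (A u - A v)]
    exact hA.1 (sub_eq_zero.mp (norm_eq_zero.mp this))
  -- contraction estimate
  have hcontr : ∀ u v : 𝔛, ‖A (Tmap A F f u) - A (Tmap A F f v)‖ ≤ K * ‖A u - A v‖ := by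
    intro u v
    rw [hTA u, hTA v]
    have : A u - (F u - f) - (A v - (F v - f)) = -(F u - F v - (A u - A v)) := by abel
    rw [this, norm_neg]
    exact hnear u v
  refine ⟨?_, ?_, ?_, ?_, hcontr, ?_, hfix⟩
  · intro u v
    rw [norm_eq_zero, sub_eq_zero]
    exact ⟨fun h => hA.1 h, fun h => by rw [h]⟩
  · intro u v; exact norm_sub_rev _ _
  · intro u v w
    calc ‖A u - A w‖ = ‖(A u - A v) + (A v - A w)‖ := by abel_nf
    _ ≤ ‖A u - A v‖ + ‖A v - A w‖ := norm_add_le _ _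
  · intro s hs
    have hc : CauchySeq (fun k => A (s k)) := by
      rw [Metric.cauchySeq_iff]
      intro ε hε
      obtain ⟨m, hm⟩ := hs ε hε
      exact ⟨m, fun p hp q hq => by rw [dist_eq_norm]; exact hm p hp q hq⟩
    obtain ⟨x, hx⟩ := cauchySeq_tendsto_of_complete hc
    refine ⟨Function.invFun A x, ?_⟩
    have := (tendsto_iff_norm_sub_tendsto_zero).mp hx
    simpa [hAinv x] using this
  · -- existence and uniqueness of fixed point via Banach on X
    set g : X → X := fun x => x - (F (Function.invFun A x) - f) with hg
    have hlip : LipschitzWith ⟨K, hK0.le⟩ g := by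
      apply LipschitzWith.of_dist_le_mul
      intro x y
      rw [dist_eq_norm, dist_eq_norm]
      have hx : A (Function.invFun A x) = x := hAinv x
      have hy : A (Function.invFun A y) = y := hAinv y
      have key := hnear (Function.invFun A x) (Function.invFun A y)
      rw [hx, hy] at key
      have : g x - g y = -(F (Function.invFun A x) - F (Function.invFun A y) - (x - y)) := by
        simp only [hg]; abel
      rw [this, norm_neg]
      exact key
    have hcw : ContractingWith ⟨K, hK0.le⟩ g := ⟨by exact_mod_cast hK1, hlip⟩
    have : Nonempty X := ⟨f⟩
    set x₀ := ContractingWith.fixedPoint g hcw with hx₀def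
    have hx₀ : g x₀ = x₀ := ContractingWith.fixedPoint_isFixedPt hcw
    set u := Function.invFun A x₀ with hu
    have hFu : F u = f := by
      have : x₀ - (F u - f) = x₀ := hx₀
      exact sub_eq_zero.mp (sub_eq_self.mp this)
    exact ⟨u, (hfix u).mpr hFu, fun v hv => huniq v u ((hfix v).mp hv) hFu⟩
end
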